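/- Let q > 2, Λ₀ > 0, n ∈ ℕ, δ ∈ (0, Λ₀/2), and let (γ_k) be a sequence of arclength-parametrized generic planar immersions, each with exactly n transverse double points and Λ(γ_k) ≥ Λ₀, converging in C¹ to a generic immersion γ with exactly n transverse double points. Then TP_{q,δ}(γ) ≤ liminf_{k→∞} TP_{q,δ}(γ_k). -/

import Mathlib

open MeasureTheory Set
open scoped ENNReal

noncomputable section

abbrev E2 := EuclideanSpace ℝ (Fin 2)

/-- Periodic distance on `ℝ/ℤ`. -/
def pdist (x y : ℝ) : ℝ := ⨅ k : ℤ, |x - y + k|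

/-- The set of self-intersection parameter pairs of `γ` (in the fundamental domain). -/
def Sset (γ : ℝ → E2) : Set (ℝ × ℝ) :=
  {p | p.1 ∈ Ico (0 : ℝ) 1 ∧ p.2 ∈ Ico (0 : ℝ) 1 ∧ p.1 < p.2 ∧ γ p.1 = γ p.2}

/-- The truncation region `Y_δ(γ)`: pairs of parameters which lie (in periodic distance)
within `δ` of a self-intersection pair. -/
def Ydel (δ : ℝ) (γ : ℝ → E2) : Set (ℝ × ℝ) :=
  {p | ∃ uv ∈ Sset γ,
    (pdist p.1 uv.1 < δ ∧ pdist p.2 uv.2 < δ) ∨ (pdist p.1 uv.2 < δ ∧ pdist p.2 uv.1 < δ)}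

/-- The tangent-point integrand `(2 dist(ℓ(x), γ(y)) / |γ(x)-γ(y)|²)^q` of an
arclength-parametrized curve. -/
def tpInt (q : ℝ) (γ : ℝ → E2) (p : ℝ × ℝ) : ℝ≥0∞ :=
  ENNReal.ofReal
    ((2 * Metric.infDist (γ p.2) {y | ∃ c : ℝ, y = γ p.1 + c • deriv γ p.1} /
        ‖γ p.1 - γ p.2‖ ^ 2) ^ q)

/-- The truncated tangent-point energy `TP_{q,δ}`. -/
def TP (q δ : ℝ) (γ : ℝ → E2) : ℝ≥0∞ :=
  ∫⁻ p in (Ico (0 : ℝ) 1 ×ˢ Ico (0 : ℝ) 1) \ Ydel δ γ, tpInt q γ p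

/-- An arclength parametrized generic closed planar immersion with exactly `n`
transverse double points. -/
def Generic (n : ℕ) (γ : ℝ → E2) : Prop :=
  (∀ t, γ (t + 1) = γ t) ∧ ContDiff ℝ 1 γ ∧ (∀ t, ‖deriv γ t‖ = 1) ∧
    (Sset γ).Finite ∧ (Sset γ).ncard = n ∧
    ∀ p ∈ Sset γ, LinearIndependent ℝ ![deriv γ p.1, deriv γ p.2]

/-- Minimal periodic distance `Λ₀` between distinct self-intersection parameters. -/
def SepBy (Λ₀ : ℝ) (γ : ℝ → E2) : Prop :=
  ∀ p ∈ Sset γ, ∀ p' ∈ Sset γ, ∀ a ∈ ({p.1, p.2} : Set ℝ), ∀ b ∈ ({p'.1, p'.2} : Set ℝ),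
    a ≠ b → Λ₀ ≤ pdist a b

/-!
By `C⁰`-convergence, limits of self-intersection pairs of the `γ_k` are self-intersection pairs
of `γ`; the separation `Λ(γ_k) ≥ Λ₀ > 0` keeps them off the diagonal. Hence for large `k` every
self-intersection pair of `γ_k` is close to one of `γ`, and a point `p ∉ Y_δ(γ)` that is not on
the (null) boundary of `Y_δ(γ)` stays outside `Y_δ(γ_k)` for large `k`. At such a point the
integrands converge by `C¹`-convergence, unless `γ(x) = γ(y)`, where the integrand of `γ`
vanishes (`0 / 0 = 0`). Fatou's lemma concludes.
-/

open Filter Topology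

lemma pdist_le (x y : ℝ) (k : ℤ) : pdist x y ≤ |x - y + k| :=
  ciInf_le ⟨0, by rintro _ ⟨k, rfl⟩; exact abs_nonneg _⟩ k

lemma pdist_nonneg (x y : ℝ) : 0 ≤ pdist x y := le_ciInf fun _ => abs_nonneg _

lemma pdist_eq_zero_of_sub_eq_intCast {x y : ℝ} (k : ℤ) (h : x - y = k) : pdist x y = 0 :=
  le_antisymm (by simpa [h] using pdist_le x y (-k)) (pdist_nonneg x y)

lemma pdist_self (x : ℝ) : pdist x x = 0 := pdist_eq_zero_of_sub_eq_intCast 0 (by simp)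

lemma pdist_le_abs_sub (x y : ℝ) : pdist x y ≤ |x - y| := by simpa using pdist_le x y 0

lemma pdist_triangle (x y z : ℝ) : pdist x z ≤ pdist x y + pdist y z := by
  have key : ∀ j k : ℤ, pdist x z ≤ |x - y + j| + |y - z + k| := fun j k =>
    calc pdist x z ≤ |x - z + ((j + k : ℤ) : ℝ)| := pdist_le x z (j + k)
      _ = |(x - y + j) + (y - z + k)| := by push_cast; ring_nf
      _ ≤ |x - y + j| + |y - z + k| := abs_add_le _ _
  have hj : ∀ j : ℤ, pdist x z - |x - y + j| ≤ pdist y z :=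
    fun j => le_ciInf fun k => by linarith [key j k]
  have : pdist x z - pdist y z ≤ pdist x y := le_ciInf fun j => by linarith [hj j]
  linarith

lemma pdist_le_pdist_add (x y x' y' : ℝ) : pdist x y ≤ pdist x' y' + (|x - x'| + |y - y'|) := by
  have h₁ := pdist_triangle x x' y
  have h₂ := pdist_triangle x' y' y
  have h₃ := pdist_le_abs_sub x x'
  have h₄ : pdist y' y ≤ |y - y'| := (pdist_le_abs_sub y' y).trans_eq (abs_sub_comm _ _)
  linarith

lemma lipschitzWith_pdist : LipschitzWith 2 fun p : ℝ × ℝ => pdist p.1 p.2 := by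
  refine LipschitzWith.of_dist_le_mul fun p p' => ?_
  have h₁ : |p.1 - p'.1| ≤ dist p p' := by rw [← Real.dist_eq, Prod.dist_eq]; exact le_max_left _ _
  have h₂ : |p.2 - p'.2| ≤ dist p p' := by rw [← Real.dist_eq, Prod.dist_eq]; exact le_max_right _ _
  rw [Real.dist_eq, abs_sub_le_iff]
  push_cast
  constructor <;> linarith [pdist_le_pdist_add p.1 p.2 p'.1 p'.2,
    pdist_le_pdist_add p'.1 p'.2 p.1 p.2, abs_sub_comm p.1 p'.1, abs_sub_comm p.2 p'.2]

lemma continuous_pdist : Continuous fun p : ℝ × ℝ => pdist p.1 p.2 :=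
  lipschitzWith_pdist.continuous

lemma pdist_eq_abs_add_round (x y : ℝ) : pdist x y = |x - y + round (y - x)| := by
  refine le_antisymm (pdist_le x y _) (le_ciInf fun k => ?_)
  by_cases hk : k = round (y - x)
  · rw [hk]
  have h₁ : (1 : ℝ) ≤ |(k : ℝ) - round (y - x)| := by
    exact_mod_cast Int.one_le_abs (sub_ne_zero.mpr hk)
  have h₂ : |x - y + round (y - x)| ≤ 1 / 2 :=
    calc |x - y + round (y - x)| = |y - x - round (y - x)| := by rw [← abs_neg]; congr 1; ring
      _ ≤ 1 / 2 := abs_sub_round _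
  have h₃ : |(k : ℝ) - round (y - x)| ≤ |x - y + k| + |x - y + round (y - x)| := by
    simpa using abs_sub (x - y + k) (x - y + round (y - x))
  linarith

lemma countable_setOf_pdist_eq (y c : ℝ) : {x : ℝ | pdist x y = c}.Countable := by
  refine (countable_iUnion fun k : ℤ => (toFinite {y - k + c, y - k - c}).countable).mono ?_
  intro x hx
  have hc : |x - y + round (y - x)| = c := (pdist_eq_abs_add_round x y).symm.trans hx
  refine mem_iUnion.mpr ⟨round (y - x), ?_⟩
  rcases (abs_eq (hc ▸ abs_nonneg _)).mp hc with h | h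
  · exact Or.inl (by linarith)
  · exact Or.inr (by simp only [mem_singleton_iff]; linarith)

lemma volume_setOf_pdist_fst_eq (y c : ℝ) : volume {p : ℝ × ℝ | pdist p.1 y = c} = 0 := by
  change volume (Prod.fst ⁻¹' {x | pdist x y = c}) = 0
  rw [← prod_univ, Measure.volume_eq_prod, Measure.prod_prod,
    (countable_setOf_pdist_eq y c).measure_zero, zero_mul]

lemma volume_setOf_pdist_snd_eq (y c : ℝ) : volume {p : ℝ × ℝ | pdist p.2 y = c} = 0 := by
  change volume (Prod.snd ⁻¹' {x | pdist x y = c}) = 0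
  rw [← univ_prod, Measure.volume_eq_prod, Measure.prod_prod,
    (countable_setOf_pdist_eq y c).measure_zero, mul_zero]

-- The sup-distance on `(ℝ/ℤ)²` modulo the swap `(x, y) ↦ (y, x)`.
def pairDist (p s : ℝ × ℝ) : ℝ :=
  min (max (pdist p.1 s.1) (pdist p.2 s.2)) (max (pdist p.1 s.2) (pdist p.2 s.1))

lemma pairDist_nonneg (p s : ℝ × ℝ) : 0 ≤ pairDist p s :=
  le_min (le_max_of_le_left (pdist_nonneg _ _)) (le_max_of_le_left (pdist_nonneg _ _))

lemma pairDist_self (p : ℝ × ℝ) : pairDist p p = 0 :=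
  le_antisymm (min_le_of_left_le (by simp [pdist_self])) (pairDist_nonneg p p)

lemma pairDist_triangle (p s t : ℝ × ℝ) : pairDist p t ≤ pairDist p s + pairDist s t := by
  have step : ∀ {x y z A B : ℝ}, pdist x y ≤ A → pdist y z ≤ B → pdist x z ≤ A + B :=
    fun h h' => (pdist_triangle _ _ _).trans (add_le_add h h')
  unfold pairDist
  rcases min_choice (max (pdist p.1 s.1) (pdist p.2 s.2)) (max (pdist p.1 s.2) (pdist p.2 s.1))
    with h | h <;>
  rcases min_choice (max (pdist s.1 t.1) (pdist s.2 t.2)) (max (pdist s.1 t.2) (pdist s.2 t.1))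
    with h' | h' <;>
  rw [h, h']
  · exact min_le_of_left_le (max_le (step (le_max_left _ _) (le_max_left _ _))
      (step (le_max_right _ _) (le_max_right _ _)))
  · exact min_le_of_right_le (max_le (step (le_max_left _ _) (le_max_left _ _))
      (step (le_max_right _ _) (le_max_right _ _)))
  · exact min_le_of_right_le (max_le (step (le_max_left _ _) (le_max_right _ _))
      (step (le_max_right _ _) (le_max_left _ _)))
  · exact min_le_of_left_le (max_le (step (le_max_left _ _) (le_max_right _ _))
      (step (le_max_right _ _) (le_max_left _ _)))

lemma continuous_pairDist_left (s : ℝ × ℝ) : Continuous fun p => pairDist p s := by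
  have h₁ : ∀ c, Continuous fun x : ℝ => pdist x c := fun c =>
    continuous_pdist.comp (continuous_id.prodMk continuous_const)
  unfold pairDist
  fun_prop

lemma volume_setOf_pairDist_eq (s : ℝ × ℝ) (c : ℝ) : volume {p | pairDist p s = c} = 0 := by
  refine measure_mono_null (fun p hp => ?_) (measure_union_null (measure_union_null
    (measure_union_null (volume_setOf_pdist_fst_eq s.1 c) (volume_setOf_pdist_snd_eq s.2 c))
    (volume_setOf_pdist_fst_eq s.2 c)) (volume_setOf_pdist_snd_eq s.1 c))
  simp only [mem_ofPred_eq, pairDist] at hp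
  simp only [mem_union, mem_ofPred_eq]
  rcases min_choice (max (pdist p.1 s.1) (pdist p.2 s.2)) (max (pdist p.1 s.2) (pdist p.2 s.1))
    with h | h <;> rw [h] at hp
  · rcases max_choice (pdist p.1 s.1) (pdist p.2 s.2) with h' | h' <;> rw [h'] at hp <;> tauto
  · rcases max_choice (pdist p.1 s.2) (pdist p.2 s.1) with h' | h' <;> rw [h'] at hp <;> tauto

lemma mem_Ydel_iff {δ : ℝ} {γ : ℝ → E2} {p : ℝ × ℝ} :
    p ∈ Ydel δ γ ↔ ∃ s ∈ Sset γ, pairDist p s < δ := by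
  simp only [Ydel, pairDist, mem_ofPred_eq, min_lt_iff, max_lt_iff]

lemma isOpen_Ydel (δ : ℝ) (γ : ℝ → E2) : IsOpen (Ydel δ γ) := by
  have : Ydel δ γ = ⋃ s ∈ Sset γ, {p | pairDist p s < δ} := by
    ext p; simp only [mem_Ydel_iff, mem_iUnion, mem_ofPred_eq, exists_prop]
  rw [this]
  exact isOpen_biUnion fun s _ => isOpen_lt (continuous_pairDist_left s) continuous_const

lemma SepBy.le_pdist {Λ₀ : ℝ} {γ : ℝ → E2} (h : SepBy Λ₀ γ) {s : ℝ × ℝ} (hs : s ∈ Sset γ) :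
    Λ₀ ≤ pdist s.1 s.2 :=
  h s hs s hs s.1 (mem_insert _ _) s.2 (mem_insert_of_mem _ rfl) hs.2.2.1.ne

lemma exists_mem_Sset_pairDist_eq_zero {γ : ℝ → E2} (hper : γ 1 = γ 0) {ℓ : ℝ × ℝ}
    (hℓ : ℓ ∈ Icc (0 : ℝ) 1 ×ˢ Icc (0 : ℝ) 1) (hle : ℓ.1 ≤ ℓ.2) (hpos : 0 < pdist ℓ.1 ℓ.2)
    (heq : γ ℓ.1 = γ ℓ.2) : ∃ s ∈ Sset γ, pairDist ℓ s = 0 := by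
  have hne : ℓ.1 ≠ ℓ.2 := fun h => by simp [h, pdist_self] at hpos
  rcases hℓ.2.2.lt_or_eq with h₂ | h₂
  · exact ⟨ℓ, ⟨⟨hℓ.1.1, hle.trans_lt h₂⟩, ⟨hℓ.2.1, h₂⟩, hle.lt_of_ne hne, heq⟩, pairDist_self ℓ⟩
  -- a double point at the seam `t = 1 ≡ 0` is recorded in `Sset γ` with parameters swapped
  have h₀ : ℓ.1 ≠ 0 := fun h => by
    simp [h, h₂, pdist_eq_zero_of_sub_eq_intCast (-1) (by norm_num : (0 : ℝ) - 1 = _)] at hpos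
  refine ⟨(0, ℓ.1), ⟨⟨le_rfl, one_pos⟩, ⟨hℓ.1.1, (hle.lt_of_ne hne).trans_eq h₂⟩,
    hℓ.1.1.lt_of_ne h₀.symm, by rw [← hper, ← h₂, heq]⟩, ?_⟩
  refine le_antisymm (min_le_of_right_le (max_le (pdist_self _).le ?_)) (pairDist_nonneg _ _)
  rw [h₂, pdist_eq_zero_of_sub_eq_intCast 1 (by norm_num)]

lemma eventually_forall_mem_Sset_exists_pairDist_lt {Γs : ℕ → ℝ → E2} {γ : ℝ → E2} {Λ₀ : ℝ}
    (hΛ : 0 < Λ₀) (hsep : ∀ k, SepBy Λ₀ (Γs k)) (hγ : Continuous γ) (hper : γ 1 = γ 0)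
    (hconv : TendstoUniformly Γs γ atTop) {ε : ℝ} (hε : 0 < ε) :
    ∀ᶠ k in atTop, ∀ s ∈ Sset (Γs k), ∃ s' ∈ Sset γ, pairDist s s' < ε := by
  by_contra hcon
  obtain ⟨φ, hφ, hφP⟩ := extraction_of_frequently_atTop (not_eventually.mp hcon)
  simp only [not_forall, not_exists, not_and, not_lt] at hφP
  choose s hs hfar using hφP
  obtain ⟨ℓ, hℓ, ψ, hψ, hlim⟩ := (isCompact_Icc.prod isCompact_Icc).tendsto_subseq
    fun i => (⟨Ico_subset_Icc_self (hs i).1, Ico_subset_Icc_self (hs i).2.1⟩ :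
      s i ∈ Icc (0 : ℝ) 1 ×ˢ Icc (0 : ℝ) 1)
  have hunif : TendstoUniformly (fun i => Γs (φ (ψ i))) γ atTop :=
    fun u hu => (hφ.comp hψ).tendsto_atTop.eventually (hconv u hu)
  have hlim₁ := (continuous_fst.tendsto ℓ).comp hlim
  have hlim₂ := (continuous_snd.tendsto ℓ).comp hlim
  have heq : γ ℓ.1 = γ ℓ.2 := tendsto_nhds_unique
    ((hunif.tendsto_comp hγ.continuousAt hlim₁).congr fun i => (hs (ψ i)).2.2.2)
    (hunif.tendsto_comp hγ.continuousAt hlim₂)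
  have hle : ℓ.1 ≤ ℓ.2 := le_of_tendsto_of_tendsto' hlim₁ hlim₂ fun i => (hs (ψ i)).2.2.1.le
  have hsepℓ : Λ₀ ≤ pdist ℓ.1 ℓ.2 :=
    ge_of_tendsto' ((continuous_pdist.tendsto ℓ).comp hlim) fun i => (hsep _).le_pdist (hs (ψ i))
  obtain ⟨s', hs', hs'ℓ⟩ :=
    exists_mem_Sset_pairDist_eq_zero hper hℓ hle (hΛ.trans_le hsepℓ) heq
  have hclose : Tendsto (fun i => pairDist (s (ψ i)) ℓ) atTop (𝓝 0) := by
    simpa [pairDist_self, Function.comp_def] using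
      ((continuous_pairDist_left ℓ).tendsto ℓ).comp hlim
  obtain ⟨i, hi⟩ := (hclose.eventually_lt_const hε).exists
  linarith [pairDist_triangle (s (ψ i)) ℓ s', hfar (ψ i) s' hs']

lemma eventually_notMem_Ydel {Γs : ℕ → ℝ → E2} {γ : ℝ → E2} {δ : ℝ} {p : ℝ × ℝ}
    (hfin : (Sset γ).Finite)
    (hnear : ∀ ε > 0, ∀ᶠ k in atTop, ∀ s ∈ Sset (Γs k), ∃ s' ∈ Sset γ, pairDist s s' < ε)
    (hp : p ∉ Ydel δ γ) (hpδ : ∀ s ∈ Sset γ, pairDist p s ≠ δ) :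
    ∀ᶠ k in atTop, p ∉ Ydel δ (Γs k) := by
  have hgt : ∀ s ∈ Sset γ, δ < pairDist p s := fun s hs =>
    (not_lt.mp fun h => hp (mem_Ydel_iff.mpr ⟨s, hs, h⟩)).lt_of_ne (hpδ s hs).symm
  have hmargin : ∀ᶠ ε in 𝓝[>] (0 : ℝ), ∀ s ∈ Sset γ, δ + ε < pairDist p s :=
    hfin.eventually_all.mpr fun s hs => eventually_nhdsWithin_of_eventually_nhds <|
      (eventually_lt_nhds (sub_pos.mpr (hgt s hs))).mono fun ε hε => by linarith
  obtain ⟨ε, hmargin, hε⟩ := (hmargin.and self_mem_nhdsWithin).exists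
  filter_upwards [hnear ε hε] with k hk hmem
  obtain ⟨s, hs, hps⟩ := mem_Ydel_iff.mp hmem
  obtain ⟨s', hs', hss'⟩ := hk s hs
  linarith [pairDist_triangle p s s', hmargin s' hs']

section TangentPoint

variable {E : Type*} [NormedAddCommGroup E] [InnerProductSpace ℝ E]

lemma infDist_affine_line {v : E} (hv : ‖v‖ = 1) (a x : E) :
    Metric.infDist x {y | ∃ c : ℝ, y = a + c • v} = ‖(x - a) - inner ℝ (x - a) v • v‖ := by
  set w := x - a with hw
  have hfoot : a + inner ℝ w v • v ∈ {y | ∃ c : ℝ, y = a + c • v} := ⟨_, rfl⟩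
  refine le_antisymm ((Metric.infDist_le_dist_of_mem hfoot).trans_eq ?_) ?_
  · rw [dist_eq_norm, sub_add_eq_sub_sub]
  refine (Metric.le_infDist ⟨_, hfoot⟩).mpr ?_
  rintro _ ⟨c, rfl⟩
  have horth : inner ℝ (w - inner ℝ w v • v) ((inner ℝ w v - c) • v) = 0 := by
    simp [inner_sub_left, real_inner_smul_left, real_inner_smul_right, hv]
  have hsplit : x - (a + c • v) = (w - inner ℝ w v • v) + (inner ℝ w v - c) • v := by
    rw [sub_smul, sub_add_eq_sub_sub, hw]; abel
  rw [dist_eq_norm, hsplit]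
  exact (mul_self_le_mul_self_iff (norm_nonneg _) (norm_nonneg _)).mpr
    ((norm_add_sq_eq_norm_sq_add_norm_sq_real horth).symm ▸ le_add_of_nonneg_right
      (mul_self_nonneg _))

-- `tpInt` with the distance from `b` to the line `a + ℝ v` (`‖v‖ = 1`) computed by orthogonal
-- projection, see `infDist_affine_line`.
def tangentPointKernel (q : ℝ) (a b v : E) : ℝ≥0∞ :=
  ENNReal.ofReal ((2 * ‖(b - a) - inner ℝ (b - a) v • v‖ / ‖a - b‖ ^ 2) ^ q)

lemma tangentPointKernel_self {q : ℝ} (hq : q ≠ 0) (a v : E) : tangentPointKernel q a a v = 0 := by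
  simp [tangentPointKernel, Real.zero_rpow hq]

lemma Filter.Tendsto.tangentPointKernel {ι : Type*} {l : Filter ι} {q : ℝ} (hq : 0 ≤ q)
    {a b v : ι → E} {a₀ b₀ v₀ : E} (ha : Tendsto a l (𝓝 a₀)) (hb : Tendsto b l (𝓝 b₀))
    (hv : Tendsto v l (𝓝 v₀)) (hab : a₀ ≠ b₀) :
    Tendsto (fun i => tangentPointKernel q (a i) (b i) (v i)) l
      (𝓝 (tangentPointKernel q a₀ b₀ v₀)) := by
  have hw := hb.sub ha
  have hden : ‖a₀ - b₀‖ ^ 2 ≠ 0 := pow_ne_zero _ (norm_ne_zero_iff.mpr (sub_ne_zero.mpr hab))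
  have hratio := (((hw.sub ((hw.inner (𝕜 := ℝ) hv).smul hv)).norm.const_mul 2).div
    ((ha.sub hb).norm.pow 2) hden)
  exact (ENNReal.continuous_ofReal.tendsto _).comp
    ((Real.continuousAt_rpow_const _ q (Or.inr hq)).tendsto.comp hratio)

lemma measurable_tangentPointKernel {X : Type*} [TopologicalSpace X] [MeasurableSpace X]
    [OpensMeasurableSpace X] (q : ℝ) {a b v : X → E} (ha : Continuous a) (hb : Continuous b)
    (hv : Continuous v) : Measurable fun x => tangentPointKernel q (a x) (b x) (v x) := by
  have hnum : Continuous fun x => 2 * ‖(b x - a x) - inner ℝ (b x - a x) (v x) • v x‖ := by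
    fun_prop
  have hden : Continuous fun x => ‖a x - b x‖ ^ 2 := by fun_prop
  exact ((hnum.measurable.div hden.measurable).pow_const q).ennreal_ofReal

end TangentPoint

lemma tpInt_eq_tangentPointKernel (q : ℝ) {γ : ℝ → E2} (hunit : ∀ t, ‖deriv γ t‖ = 1)
    (p : ℝ × ℝ) : tpInt q γ p = tangentPointKernel q (γ p.1) (γ p.2) (deriv γ p.1) := by
  rw [tpInt, infDist_affine_line (hunit p.1), tangentPointKernel]

lemma measurable_tpInt (q : ℝ) {γ : ℝ → E2} (hγ : ContDiff ℝ 1 γ)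
    (hunit : ∀ t, ‖deriv γ t‖ = 1) : Measurable (tpInt q γ) := by
  simp only [funext (tpInt_eq_tangentPointKernel q hunit)]
  exact measurable_tangentPointKernel q (hγ.continuous.comp continuous_fst)
    (hγ.continuous.comp continuous_snd) ((hγ.continuous_deriv le_rfl).comp continuous_fst)

lemma measurableSet_Ico_prod_diff_Ydel (δ : ℝ) (γ : ℝ → E2) :
    MeasurableSet ((Ico (0 : ℝ) 1 ×ˢ Ico (0 : ℝ) 1) \ Ydel δ γ) :=
  (measurableSet_Ico.prod measurableSet_Ico).diff (isOpen_Ydel δ γ).measurableSet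

lemma TP_eq_lintegral_indicator (q δ : ℝ) (γ : ℝ → E2) :
    TP q δ γ = ∫⁻ p, ((Ico (0 : ℝ) 1 ×ˢ Ico (0 : ℝ) 1) \ Ydel δ γ).indicator (tpInt q γ) p :=
  (lintegral_indicator (measurableSet_Ico_prod_diff_Ydel δ γ) _).symm

lemma tendsto_tpInt {ι : Type*} {l : Filter ι} {q : ℝ} (hq : 0 ≤ q) {Γs : ι → ℝ → E2}
    {γ : ℝ → E2} (hunitk : ∀ k t, ‖deriv (Γs k) t‖ = 1) (hunit : ∀ t, ‖deriv γ t‖ = 1)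
    (hconv : ∀ t, Tendsto (fun k => Γs k t) l (𝓝 (γ t)))
    (hconv' : ∀ t, Tendsto (fun k => deriv (Γs k) t) l (𝓝 (deriv γ t)))
    {p : ℝ × ℝ} (hp : γ p.1 ≠ γ p.2) :
    Tendsto (fun k => tpInt q (Γs k) p) l (𝓝 (tpInt q γ p)) := by
  simp only [tpInt_eq_tangentPointKernel q (hunitk _), tpInt_eq_tangentPointKernel q hunit]
  exact (hconv p.1).tangentPointKernel hq (hconv p.2) (hconv' p.1) hp

lemma ae_indicator_tpInt_le_liminf {q δ : ℝ} (hq : 0 < q) {Γs : ℕ → ℝ → E2} {γ : ℝ → E2}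
    (hunitk : ∀ k t, ‖deriv (Γs k) t‖ = 1) (hunit : ∀ t, ‖deriv γ t‖ = 1)
    (hconv : ∀ t, Tendsto (fun k => Γs k t) atTop (𝓝 (γ t)))
    (hconv' : ∀ t, Tendsto (fun k => deriv (Γs k) t) atTop (𝓝 (deriv γ t)))
    (hfin : (Sset γ).Finite)
    (hnear : ∀ ε > 0, ∀ᶠ k in atTop, ∀ s ∈ Sset (Γs k), ∃ s' ∈ Sset γ, pairDist s s' < ε)
    (D : Set (ℝ × ℝ)) :
    ∀ᵐ p : ℝ × ℝ, (D \ Ydel δ γ).indicator (tpInt q γ) p ≤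
      liminf (fun k => (D \ Ydel δ (Γs k)).indicator (tpInt q (Γs k)) p) atTop := by
  have hbdry : ∀ᵐ p : ℝ × ℝ, ∀ s ∈ Sset γ, pairDist p s ≠ δ :=
    (ae_ball_iff hfin.countable).mpr fun s _ =>
      measure_eq_zero_iff_ae_notMem.mp (volume_setOf_pairDist_eq s δ)
  filter_upwards [hbdry] with p hp
  by_cases hpD : p ∈ D \ Ydel δ γ
  · rw [indicator_of_mem hpD]
    rcases eq_or_ne (γ p.1) (γ p.2) with h | h
    · simp [tpInt_eq_tangentPointKernel q hunit, h, tangentPointKernel_self hq.ne']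
    have hev : ∀ᶠ k in atTop,
        (D \ Ydel δ (Γs k)).indicator (tpInt q (Γs k)) p = tpInt q (Γs k) p :=
      (eventually_notMem_Ydel hfin hnear hpD.2 hp).mono fun k hk =>
        indicator_of_mem (show p ∈ D \ Ydel δ (Γs k) from ⟨hpD.1, hk⟩) _
    rw [liminf_congr hev, (tendsto_tpInt hq.le hunitk hunit hconv hconv' h).liminf_eq]
  · simp [indicator_of_notMem hpD]

theorem stmt18_general (q Λ₀ δ : ℝ) (n : ℕ) (hq : 2 < q) (hΛ : 0 < Λ₀)
    (Γs : ℕ → ℝ → E2) (γ : ℝ → E2)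
    (hgenk : ∀ k, Generic n (Γs k)) (hsep : ∀ k, SepBy Λ₀ (Γs k))
    (hgen : Generic n γ)
    (hconv : TendstoUniformly Γs γ Filter.atTop)
    (hconv' : TendstoUniformly (fun k => deriv (Γs k)) (deriv γ) Filter.atTop) :
    TP q δ γ ≤ Filter.atTop.liminf fun k => TP q δ (Γs k) := by
  obtain ⟨hper, hγ, hunit, hfin, -, -⟩ := hgen
  have hunitk : ∀ k t, ‖deriv (Γs k) t‖ = 1 := fun k => (hgenk k).2.2.1
  have hnear : ∀ ε > 0, ∀ᶠ k in atTop, ∀ s ∈ Sset (Γs k), ∃ s' ∈ Sset γ, pairDist s s' < ε :=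
    fun ε hε => eventually_forall_mem_Sset_exists_pairDist_lt hΛ hsep hγ.continuous
      (by simpa using hper 0) hconv hε
  have hpointwise := ae_indicator_tpInt_le_liminf (δ := δ) (by linarith : 0 < q) hunitk hunit
    hconv.tendsto_at hconv'.tendsto_at hfin hnear (Ico (0 : ℝ) 1 ×ˢ Ico (0 : ℝ) 1)
  simp only [TP_eq_lintegral_indicator]
  refine (lintegral_mono_ae hpointwise).trans (lintegral_liminf_le' fun k => ?_)
  exact ((measurable_tpInt q (hgenk k).2.1 (hunitk k)).indicator
    (measurableSet_Ico_prod_diff_Ydel δ (Γs k))).aemeasurable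

/-- Lower semicontinuity of the truncated tangent-point energy along `C¹`-convergent
sequences of generic immersions with uniformly separated self-intersections. -/
theorem stmt18 (q Λ₀ δ : ℝ) (n : ℕ) (hq : 2 < q) (hΛ : 0 < Λ₀)
    (hδ : 0 < δ) (hδΛ : δ < Λ₀ / 2)
    (Γs : ℕ → ℝ → E2) (γ : ℝ → E2)
    (hgenk : ∀ k, Generic n (Γs k)) (hsep : ∀ k, SepBy Λ₀ (Γs k))
    (hgen : Generic n γ)
    (hconv : TendstoUniformly Γs γ Filter.atTop)
    (hconv' : TendstoUniformly (fun k => deriv (Γs k)) (deriv γ) Filter.atTop) :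
    TP q δ γ ≤ Filter.atTop.liminf fun k => TP q δ (Γs k) :=
  stmt18_general q Λ₀ δ n hq hΛ Γs γ hgenk hsep hgen hconv hconv'

end
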